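/- Let D be a digraph with at least one arc. Then ⟨D⟩ is L-trivial if and only if (i) every vertex of D has out-degree at most 1, and (ii) D contains no cycle of length greater than 2. -/

import Mathlib

/-- The transformation of `{1,…,n}` sending `a` to `b` and fixing all other points. -/
def arcT {n : ℕ} (a b : Fin n) : Fin n → Fin n := fun v => if v = a then b else v

/-- The semigroup `⟨D⟩` generated by the arcs of the digraph `D`; transformations act on
the right, so a product `ε₁ε₂⋯ε_k` is the function `ε_k ∘ ⋯ ∘ ε₁`. -/
def genSg {n : ℕ} (D : Set (Fin n × Fin n)) : Set (Fin n → Fin n) :=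
  { α | ∃ l : List (Fin n × Fin n), l ≠ [] ∧ (∀ p ∈ l, p ∈ D) ∧
      α = l.foldl (fun f p => arcT p.1 p.2 ∘ f) id }

/-- The product `x·y` in the right-action convention: apply `x` first, then `y`. -/
def sgMul {n : ℕ} (x y : Fin n → Fin n) : Fin n → Fin n := y ∘ x

/-- The right ideal `xS¹ = {x} ∪ xS`. -/
def rIdeal {n : ℕ} (S : Set (Fin n → Fin n)) (x : Fin n → Fin n) : Set (Fin n → Fin n) :=
  insert x { y | ∃ s ∈ S, y = sgMul x s }

/-- The left ideal `S¹x = {x} ∪ Sx`. -/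
def lIdeal {n : ℕ} (S : Set (Fin n → Fin n)) (x : Fin n → Fin n) : Set (Fin n → Fin n) :=
  insert x { y | ∃ s ∈ S, y = sgMul s x }

/-- The two-sided ideal `S¹xS¹`. -/
def jIdeal {n : ℕ} (S : Set (Fin n → Fin n)) (x : Fin n → Fin n) : Set (Fin n → Fin n) :=
  { y | ∃ s ∈ insert id S, ∃ t ∈ insert id S, y = sgMul s (sgMul x t) }

def RRel {n : ℕ} (S : Set (Fin n → Fin n)) (x y : Fin n → Fin n) : Prop :=
  rIdeal S x = rIdeal S y

def LRel {n : ℕ} (S : Set (Fin n → Fin n)) (x y : Fin n → Fin n) : Prop :=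
  lIdeal S x = lIdeal S y

def JRel {n : ℕ} (S : Set (Fin n → Fin n)) (x y : Fin n → Fin n) : Prop :=
  jIdeal S x = jIdeal S y

def RTrivial {n : ℕ} (S : Set (Fin n → Fin n)) : Prop :=
  ∀ x ∈ S, ∀ y ∈ S, RRel S x y → x = y

def LTrivial {n : ℕ} (S : Set (Fin n → Fin n)) : Prop :=
  ∀ x ∈ S, ∀ y ∈ S, LRel S x y → x = y

def HTrivial {n : ℕ} (S : Set (Fin n → Fin n)) : Prop :=
  ∀ x ∈ S, ∀ y ∈ S, RRel S x y → LRel S x y → x = y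

def JTrivial {n : ℕ} (S : Set (Fin n → Fin n)) : Prop :=
  ∀ x ∈ S, ∀ y ∈ S, JRel S x y → x = y

/-- `α` has a cycle of length `k`: `k` distinct points `a₀,…,a_{k-1}` with
`α(aᵢ) = a_{i+1 mod k}`. -/
def IsCycleOf {n : ℕ} (α : Fin n → Fin n) (k : ℕ) : Prop :=
  0 < k ∧ ∃ a : ZMod k → Fin n, Function.Injective a ∧ ∀ i, α (a i) = a (i + 1)

/-- `l(D)`: the maximal length of a cycle of an element of `⟨D⟩`. -/
noncomputable def lD {n : ℕ} (D : Set (Fin n × Fin n)) : ℕ :=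
  sSup { k | ∃ α ∈ genSg D, IsCycleOf α k }

/-- The arc set of a graph. -/
def arcsOf {n : ℕ} (G : SimpleGraph (Fin n)) : Set (Fin n × Fin n) :=
  { p | G.Adj p.1 p.2 }

/-- `l(G)` for a graph `G`. -/
noncomputable def lG {n : ℕ} (G : SimpleGraph (Fin n)) : ℕ := lD (arcsOf G)

/-- Reachability along directed walks of `D`. -/
def dreach {n : ℕ} (D : Set (Fin n × Fin n)) : Fin n → Fin n → Prop :=
  Relation.ReflTransGen (fun a b => (a, b) ∈ D)

/-- The strong component of the vertex `v`. -/
def strongComp {n : ℕ} (D : Set (Fin n × Fin n)) (v : Fin n) : Set (Fin n) :=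
  { u | dreach D u v ∧ dreach D v u }

/-- The underlying graph of the digraph `D`. -/
def underlying {n : ℕ} (D : Set (Fin n × Fin n)) : SimpleGraph (Fin n) where
  Adj a b := a ≠ b ∧ ((a, b) ∈ D ∨ (b, a) ∈ D)
  symm := ⟨fun a b h => ⟨h.1.symm, h.2.symm⟩⟩
  loopless := ⟨fun a h => h.1 rfl⟩

/-- `v 0, v 1, …, v r` is a cycle of the digraph `D`. -/
def IsDCycle {n : ℕ} (D : Set (Fin n × Fin n)) (r : ℕ) (v : ℕ → Fin n) : Prop :=
  1 ≤ r ∧ v r = v 0 ∧ (∀ i < r, ∀ j < r, v i = v j → i = j) ∧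
    ∀ i < r, (v i, v (i + 1)) ∈ D

def HasDCycle {n : ℕ} (D : Set (Fin n × Fin n)) : Prop := ∃ r v, IsDCycle D r v

def DAcyclic {n : ℕ} (D : Set (Fin n × Fin n)) : Prop := ¬ HasDCycle D

/-- `G` is a subgroup contained in the transformation semigroup `S`. -/
def IsSubgroupIn {n : ℕ} (S G : Set (Fin n → Fin n)) : Prop :=
  G ⊆ S ∧ (∀ x ∈ G, ∀ y ∈ G, sgMul x y ∈ G) ∧
    ∃ e ∈ G, (∀ x ∈ G, sgMul e x = x ∧ sgMul x e = x) ∧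
      ∀ x ∈ G, ∃ y ∈ G, sgMul x y = e ∧ sgMul y x = e

/-- Every subgroup of `S` is trivial. -/
def SgAperiodic {n : ℕ} (S : Set (Fin n → Fin n)) : Prop :=
  ∀ G, IsSubgroupIn S G → G.Subsingleton

/-!
Two arcs `a → p`, `a → q` with `p ≠ q` are distinct `L`-related generators of `⟨D⟩`. Going once
around a cycle `v₀ → ⋯ → v_{r-1} → v₀` gives an element acting as an `(r - 1)`-cycle on
`v₁, …, v_{r-1}`; for `r > 2` it has no idempotent power `f^k = f^(k+1)`, which every element of an
`L`-trivial semigroup has.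

Conversely, let `D` be functional with only 2-cycles. Every element of `⟨D⟩` moves each vertex
forward and is monotone for reachability, and an element that does not identify the two vertices
of a 2-cycle never uses its arcs. If `x = y ∘ s` and `y = x ∘ t`, then `x = x ∘ e` for an
idempotent power `e` of `t ∘ s`; these facts force `e ∘ t = e`, whence
`y = x ∘ t = x ∘ e ∘ t = x ∘ e = x`.
-/

section

variable {n : ℕ}

section LRelation

variable {S : Set (Fin n → Fin n)}

lemma lIdeal_subset_of_eq_sgMul (hS : ∀ x ∈ S, ∀ y ∈ S, sgMul x y ∈ S)
    {x y σ : Fin n → Fin n} (hσ : σ ∈ S) (hx : x = sgMul σ y) : lIdeal S x ⊆ lIdeal S y := by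
  rintro z (rfl | ⟨s, hs, rfl⟩)
  · exact Or.inr ⟨σ, hσ, hx⟩
  · exact Or.inr ⟨sgMul s σ, hS s hs σ hσ, by rw [hx]; rfl⟩

lemma lRel_of_eq_sgMul (hS : ∀ x ∈ S, ∀ y ∈ S, sgMul x y ∈ S)
    {x y σ τ : Fin n → Fin n} (hσ : σ ∈ S) (hτ : τ ∈ S)
    (hx : x = sgMul σ y) (hy : y = sgMul τ x) : LRel S x y :=
  (lIdeal_subset_of_eq_sgMul hS hσ hx).antisymm (lIdeal_subset_of_eq_sgMul hS hτ hy)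

lemma LRel.eq_or_exists_sgMul {x y : Fin n → Fin n} (h : LRel S x y) :
    x = y ∨ (∃ s ∈ S, x = sgMul s y) ∧ ∃ t ∈ S, y = sgMul t x := by
  have hx : x ∈ lIdeal S y := h ▸ Set.mem_insert x _
  have hy : y ∈ lIdeal S x := h ▸ Set.mem_insert y _
  rcases hx with rfl | hx
  · exact Or.inl rfl
  rcases hy with rfl | hy
  · exact Or.inl rfl
  exact Or.inr ⟨hx, hy⟩

lemma iterate_mem_of_sgMul_mem (hS : ∀ x ∈ S, ∀ y ∈ S, sgMul x y ∈ S)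
    {f : Fin n → Fin n} (hf : f ∈ S) {k : ℕ} (hk : 1 ≤ k) : f^[k] ∈ S := by
  induction k, hk using Nat.le_induction with
  | base => simpa using hf
  | succ k _ ih => rw [Function.iterate_succ]; exact hS f hf _ ih

end LRelation

lemma exists_iterate_idempotent {α : Type*} [Finite α] (f : α → α) :
    ∃ m, 1 ≤ m ∧ f^[m] ∘ f^[m] = f^[m] := by
  obtain ⟨i, j, hij, heq⟩ := Finite.exists_ne_map_eq_of_infinite (fun k : ℕ => f^[k])
  wlog hlt : i < j generalizing i j
  · exact this j i hij.symm heq.symm (by omega)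
  obtain ⟨p, rfl⟩ := Nat.exists_eq_add_of_lt hlt
  have hperiodic : ∀ q N, i ≤ N → f^[N + q * (p + 1)] = f^[N] := fun q => by
    induction q with
    | zero => simp
    | succ q ih =>
      intro N hN
      rw [show N + (q + 1) * (p + 1) = (N + q * (p + 1) - i) + (i + p + 1) by
          rw [add_one_mul]; omega,
        Function.iterate_add, ← heq, ← Function.iterate_add, Nat.sub_add_cancel (by omega), ih N hN]
  refine ⟨(i + 1) * (p + 1), Nat.one_le_iff_ne_zero.2 (by positivity), ?_⟩
  rw [← Function.iterate_add, hperiodic _ _ (by nlinarith)]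

lemma exists_iterate_succ_eq_of_lTrivial {S : Set (Fin n → Fin n)}
    (hS : ∀ x ∈ S, ∀ y ∈ S, sgMul x y ∈ S) (hL : LTrivial S) {f : Fin n → Fin n} (hf : f ∈ S) :
    ∃ k, f^[k + 1] = f^[k] := by
  obtain ⟨m, hm, he⟩ := exists_iterate_idempotent f
  have hx := iterate_mem_of_sgMul_mem hS hf hm
  have hy := iterate_mem_of_sgMul_mem hS hf (k := m + 1) (by omega)
  have hσ := iterate_mem_of_sgMul_mem hS hf (k := 2 * m - 1) (by omega)
  have hxy : f^[m] = sgMul f^[2 * m - 1] f^[m + 1] := by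
    rw [sgMul, ← Function.iterate_add, show m + 1 + (2 * m - 1) = m + m + m by omega,
      Function.iterate_add, Function.iterate_add, he, he]
  exact ⟨m, (hL _ hx _ hy (lRel_of_eq_sgMul hS hσ hf hxy (Function.iterate_succ f m))).symm⟩

lemma iterate_succ_ne_of_mapsTo {α : Type*} {f : α → α} {C : Set α} (hC : Set.MapsTo f C C)
    (hfix : ∀ c ∈ C, f c ≠ c) (hne : C.Nonempty) (k : ℕ) : f^[k + 1] ≠ f^[k] := by
  obtain ⟨c, hc⟩ := hne
  intro h
  exact hfix _ (hC.iterate k hc) ((Function.iterate_succ_apply' f k c).symm.trans (congrFun h c))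

section GeneratedSemigroup

variable {D : Set (Fin n × Fin n)}

lemma foldl_arcT_eq_comp (l : List (Fin n × Fin n)) (h : Fin n → Fin n) :
    l.foldl (fun f p => arcT p.1 p.2 ∘ f) h = l.foldl (fun f p => arcT p.1 p.2 ∘ f) id ∘ h := by
  induction l generalizing h with
  | nil => rfl
  | cons p l ih =>
    simp only [List.foldl_cons]
    rw [ih (arcT p.1 p.2 ∘ h), ih (arcT p.1 p.2 ∘ id)]
    rfl

lemma arcT_mem_genSg {a b : Fin n} (h : (a, b) ∈ D) : arcT a b ∈ genSg D :=
  ⟨[(a, b)], by simp, by simp [h], rfl⟩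

lemma sgMul_mem_genSg {x y : Fin n → Fin n} (hx : x ∈ genSg D) (hy : y ∈ genSg D) :
    sgMul x y ∈ genSg D := by
  obtain ⟨lx, hlx, hlxD, rfl⟩ := hx
  obtain ⟨ly, -, hlyD, rfl⟩ := hy
  refine ⟨lx ++ ly, by simp [hlx], fun p hp => (List.mem_append.1 hp).elim (hlxD p) (hlyD p), ?_⟩
  rw [List.foldl_append, foldl_arcT_eq_comp ly (lx.foldl _ id)]
  rfl

lemma genSg_induction {Q : (Fin n → Fin n) → Prop} (hid : Q id)
    (hstep : ∀ h a b, (a, b) ∈ D → Q h → Q (arcT a b ∘ h)) : ∀ α ∈ genSg D, Q α := by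
  rintro α ⟨l, -, hlD, rfl⟩
  suffices H : ∀ h, Q h → Q (l.foldl (fun f p => arcT p.1 p.2 ∘ f) h) from H id hid
  induction l with
  | nil => exact fun _ hQ => hQ
  | cons p l ih =>
    exact fun h hQ => ih (fun q hq => hlD q (List.mem_cons_of_mem _ hq)) _
      (hstep h p.1 p.2 (hlD p List.mem_cons_self) hQ)

end GeneratedSemigroup

section PathProduct

/-- The product `(w_{m-1} → w_m)⋯(w₁ → w₂)(w₀ → w₁)` of the arcs of the path `w₀ → ⋯ → w_m`:
taken last arc first, it moves each `w_j` with `j < m` exactly one step. -/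
def pathProd (w : ℕ → Fin n) : ℕ → Fin n → Fin n
  | 0 => id
  | m + 1 => pathProd w m ∘ arcT (w m) (w (m + 1))

variable {D : Set (Fin n × Fin n)} {w : ℕ → Fin n}

lemma pathProd_mem_genSg {m : ℕ} (hw : ∀ i < m, (w i, w (i + 1)) ∈ D) (hm : 1 ≤ m) :
    pathProd w m ∈ genSg D := by
  induction m, hm using Nat.le_induction with
  | base => exact arcT_mem_genSg (hw 0 one_pos)
  | succ m hm ih =>
    exact sgMul_mem_genSg (arcT_mem_genSg (hw m m.lt_succ_self))
      (ih fun i hi => hw i (hi.trans m.lt_succ_self))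

lemma pathProd_apply_of_forall_ne {m : ℕ} {u : Fin n} (hu : ∀ j < m, u ≠ w j) :
    pathProd w m u = u := by
  induction m with
  | zero => rfl
  | succ m ih =>
    simp only [pathProd, Function.comp_apply, arcT, if_neg (hu m m.lt_succ_self)]
    exact ih fun j hj => hu j (hj.trans m.lt_succ_self)

lemma pathProd_apply {m j : ℕ} (hw : Set.InjOn w (Set.Iic m)) (hj : j < m) :
    pathProd w m (w j) = w (j + 1) := by
  induction m with
  | zero => omega
  | succ m ih =>
    have hne : ∀ {i k}, i ≤ m + 1 → k ≤ m + 1 → i ≠ k → w i ≠ w k := fun hi hk hik h =>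
      hik (hw (Set.mem_Iic.2 hi) (Set.mem_Iic.2 hk) h)
    simp only [pathProd, Function.comp_apply, arcT]
    rcases Nat.lt_succ_iff_lt_or_eq.1 hj with hj | rfl
    · rw [if_neg (hne (by omega) (by omega) hj.ne)]
      exact ih (hw.mono (Set.Iic_subset_Iic.2 m.le_succ)) hj
    · rw [if_pos rfl]
      exact pathProd_apply_of_forall_ne fun k hk => hne (by omega) (by omega) (by omega)

end PathProduct

lemma not_lTrivial_genSg_of_isDCycle {D : Set (Fin n × Fin n)} {r : ℕ} {v : ℕ → Fin n}
    (hc : IsDCycle D r v) (hr : 2 < r) : ¬ LTrivial (genSg D) := by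
  obtain ⟨-, hvr, hinj, harc⟩ := hc
  obtain ⟨m, rfl⟩ : ∃ m, r = m + 1 := ⟨r - 1, by omega⟩
  have hinj' : Set.InjOn v (Set.Iic m) := fun i hi j hj =>
    hinj i (Nat.lt_succ_of_le hi) j (Nat.lt_succ_of_le hj)
  have hstep : ∀ j < m, pathProd v (m + 1) (v j) = v (j + 1) := fun j hj => by
    rw [pathProd, Function.comp_apply, arcT, if_neg fun h => hj.ne (hinj' (Set.mem_Iic.2 hj.le)
      Set.self_mem_Iic h), pathProd_apply hinj' hj]
  have hwrap : pathProd v (m + 1) (v m) = v 1 := by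
    rw [pathProd, Function.comp_apply, arcT, if_pos rfl, hvr, pathProd_apply hinj' (by omega)]
  intro hL
  obtain ⟨k, hk⟩ := exists_iterate_succ_eq_of_lTrivial (fun _ hx _ hy => sgMul_mem_genSg hx hy) hL
    (pathProd_mem_genSg harc (by omega))
  refine iterate_succ_ne_of_mapsTo (C := v '' Set.Icc 1 m) ?_ ?_ ⟨v 1, 1, by simp; omega, rfl⟩ k hk
  · rintro _ ⟨j, ⟨hj1, hjm⟩, rfl⟩
    rcases hjm.lt_or_eq with hjm | rfl
    · exact ⟨j + 1, ⟨by omega, hjm⟩, (hstep j hjm).symm⟩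
    · exact ⟨1, ⟨le_rfl, by omega⟩, hwrap.symm⟩
  · rintro _ ⟨j, ⟨hj1, hjm⟩, rfl⟩ h
    rcases hjm.lt_or_eq with hjm | rfl
    · rw [hstep j hjm] at h
      exact absurd (hinj' (Set.mem_Iic.2 hjm) (Set.mem_Iic.2 hjm.le) h) (by omega)
    · rw [hwrap] at h
      exact absurd (hinj' (Set.mem_Iic.2 (by omega)) Set.self_mem_Iic h) (by omega)

lemma arcT_comp_arcT_of_ne {a b c : Fin n} (h : b ≠ a) : arcT a c ∘ arcT a b = arcT a b := by
  funext u
  by_cases hu : u = a <;> simp [arcT, hu, h]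

lemma not_lTrivial_genSg_of_mem_of_mem {D : Set (Fin n × Fin n)} {a p q : Fin n}
    (hp : (a, p) ∈ D) (hq : (a, q) ∈ D) (hpa : p ≠ a) (hqa : q ≠ a) (hpq : p ≠ q) :
    ¬ LTrivial (genSg D) := fun hL => by
  have hxy := hL _ (arcT_mem_genSg hp) _ (arcT_mem_genSg hq)
    (lRel_of_eq_sgMul (fun _ hx _ hy => sgMul_mem_genSg hx hy) (arcT_mem_genSg hp)
      (arcT_mem_genSg hq) (arcT_comp_arcT_of_ne hpa).symm (arcT_comp_arcT_of_ne hqa).symm)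
  exact hpq (by simpa [arcT] using congrFun hxy a)

def OutDegLeOne (E : Set (Fin n × Fin n)) : Prop :=
  ∀ a : Fin n, { b : Fin n | (a, b) ∈ E }.Subsingleton

section Reachability

variable {E D : Set (Fin n × Fin n)}

lemma dreach_arcT_apply {p q : Fin n} (h : (p, q) ∈ E) (w : Fin n) : dreach E w (arcT p q w) := by
  by_cases hw : w = p
  · subst hw
    simp only [arcT, ↓reduceIte]
    exact Relation.ReflTransGen.single h
  · simp only [arcT, if_neg hw]
    exact Relation.ReflTransGen.refl

lemma dreach_apply {α : Fin n → Fin n} (hα : α ∈ genSg D) (u : Fin n) : dreach D u (α u) :=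
  genSg_induction (Q := fun α => ∀ u, dreach D u (α u)) (fun _ => Relation.ReflTransGen.refl)
    (fun _ _ _ hab hQ u => (hQ u).trans (dreach_arcT_apply hab _)) α hα u

lemma dreach_iterate_apply {α : Fin n → Fin n} (hα : α ∈ genSg D) (u : Fin n) (k : ℕ) :
    dreach D u (α^[k] u) := by
  induction k with
  | zero => exact Relation.ReflTransGen.refl
  | succ k ih => exact ih.trans (Function.iterate_succ_apply' α k u ▸ dreach_apply hα _)

lemma eq_or_dreach_of_mem_of_dreach (hE : OutDegLeOne E)
    {a b w : Fin n} (hab : (a, b) ∈ E) (h : dreach E a w) : w = a ∨ dreach E b w := by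
  rcases h.cases_head with h | ⟨c, hc, hcw⟩
  · exact Or.inl h.symm
  · exact Or.inr (hE a hc hab ▸ hcw)

lemma dreach_arcT_apply_of_dreach (hE : OutDegLeOne E)
    {c d p q : Fin n} (hcd : (c, d) ∈ E) (h : dreach E p q) :
    dreach E (arcT c d p) (arcT c d q) := by
  by_cases hp : p = c
  · subst hp
    by_cases hq : q = p
    · rw [hq]
      exact Relation.ReflTransGen.refl
    · rcases eq_or_dreach_of_mem_of_dreach hE hcd h with h | h
      · exact absurd h hq
      · simpa [arcT, hq] using h
  · by_cases hq : q = c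
    · subst hq
      simp only [arcT, hp, ↓reduceIte]
      exact h.tail hcd
    · simpa [arcT, hp, hq] using h

lemma dreach_apply_of_dreach (hD : OutDegLeOne D)
    {α : Fin n → Fin n} (hα : α ∈ genSg D) {p q : Fin n} (h : dreach D p q) :
    dreach D (α p) (α q) :=
  genSg_induction (Q := fun α => ∀ p q, dreach D p q → dreach D (α p) (α q)) (fun _ _ h => h)
    (fun _ _ _ hab hQ p q h => dreach_arcT_apply_of_dreach hD hab (hQ p q h)) α hα p q h

lemma eq_of_dreach_of_sink {a w : Fin n} (ha : ∀ w, (a, w) ∉ E)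
    (h : dreach E a w) : w = a := by
  rcases h.cases_head with h | ⟨c, hc, -⟩
  · exact h.symm
  · exact absurd hc (ha c)

lemma eq_of_dreach_of_dreach_of_sinks (hE : OutDegLeOne E)
    {u a b : Fin n} (ha : ∀ w, (a, w) ∉ E) (hb : ∀ w, (b, w) ∉ E)
    (hua : dreach E u a) (hub : dreach E u b) : a = b := by
  induction hua using Relation.ReflTransGen.head_induction_on with
  | refl => exact (eq_of_dreach_of_sink ha hub).symm
  | head huc _ ih =>
    rcases eq_or_dreach_of_mem_of_dreach hE huc hub with rfl | h
    · exact absurd huc (hb _)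
    · exact ih h

end Reachability

section FunctionalDigraph

variable {D : Set (Fin n × Fin n)}

open Classical in
/-- The out-neighbour of `u`, or `u` itself if `u` is a sink. -/
noncomputable def outNbr (D : Set (Fin n × Fin n)) (u : Fin n) : Fin n :=
  if h : ∃ w, (u, w) ∈ D then h.choose else u

lemma outNbr_eq (hD : OutDegLeOne D) {u w : Fin n}
    (h : (u, w) ∈ D) : outNbr D u = w := by
  have hex : ∃ w, (u, w) ∈ D := ⟨w, h⟩
  rw [outNbr, dif_pos hex]
  exact hD u hex.choose_spec h

lemma exists_iterate_outNbr_of_dreach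
    (hD : OutDegLeOne D) {u w : Fin n}
    (h : dreach D u w) : ∃ k, (outNbr D)^[k] u = w ∧
      ∀ i < k, ((outNbr D)^[i] u, (outNbr D)^[i + 1] u) ∈ D := by
  induction h with
  | refl => exact ⟨0, rfl, by omega⟩
  | tail _ harc ih =>
    obtain ⟨k, rfl, hk⟩ := ih
    refine ⟨k + 1, by rw [Function.iterate_succ_apply', outNbr_eq hD harc], fun i hi => ?_⟩
    rcases Nat.lt_succ_iff_lt_or_eq.1 hi with hi | rfl
    · exact hk i hi
    · rwa [Function.iterate_succ_apply' _ i, outNbr_eq hD harc]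

/-- Mutually reachable vertices lie on a common cycle, the orbit of `a` under `outNbr D`; as
cycles have length at most `2`, that orbit is `a ⇄ b`. -/
lemma mem_and_swap_mem_of_dreach_of_dreach
    (hD : OutDegLeOne D) (hloop : ∀ u : Fin n, (u, u) ∉ D)
    (hcyc : ¬ ∃ (r : ℕ) (v : ℕ → Fin n), IsDCycle D r v ∧ 2 < r) {a b : Fin n}
    (hab : dreach D a b) (hba : dreach D b a) (hne : a ≠ b) : (a, b) ∈ D ∧ (b, a) ∈ D := by
  set f := outNbr D
  obtain ⟨k, rfl, hk⟩ := exists_iterate_outNbr_of_dreach hD hab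
  obtain ⟨l, hl, hl'⟩ := exists_iterate_outNbr_of_dreach hD hba
  have hk0 : k ≠ 0 := by rintro rfl; exact hne rfl
  have hper : Function.IsPeriodicPt f (l + k) a := by
    rw [Function.IsPeriodicPt, Function.IsFixedPt, Function.iterate_add_apply, hl]
  have harc : ∀ i < l + k, (f^[i] a, f^[i + 1] a) ∈ D := fun i hi => by
    rcases lt_or_ge i k with h | h
    · exact hk i h
    · obtain ⟨j, rfl⟩ := Nat.exists_eq_add_of_le h
      have := hl' j (by omega)
      rwa [← Function.iterate_add_apply, ← Function.iterate_add_apply, add_right_comm,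
        add_comm j] at this
  have hpos := hper.minimalPeriod_pos (by omega)
  have hle := hper.minimalPeriod_le (by omega)
  have hcycle : IsDCycle D (Function.minimalPeriod f a) (f^[·] a) :=
    ⟨hpos, Function.iterate_minimalPeriod, fun i hi j hj h =>
      Function.iterate_injOn_Iio_minimalPeriod hi hj h, fun i hi => harc i (by omega)⟩
  have hp2 : Function.minimalPeriod f a ≤ 2 := not_lt.1 fun h => hcyc ⟨_, _, hcycle, h⟩
  have hp1 : Function.minimalPeriod f a ≠ 1 := fun h => by
    have := harc 0 (by omega)
    rw [zero_add, ← h, Function.iterate_minimalPeriod] at this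
    exact hloop a this
  have hp : Function.minimalPeriod f a = 2 := by omega
  have hb : f^[k] a = f a := by
    rw [← Function.iterate_mod_minimalPeriod_eq, hp]
    rcases Nat.mod_two_eq_zero_or_one k with h | h
    · refine absurd ?_ hne
      rw [← Function.iterate_mod_minimalPeriod_eq, hp, h]
      rfl
    · rw [h, Function.iterate_one]
  have h1 := harc 1 (by omega)
  rw [show 1 + 1 = Function.minimalPeriod f a from hp.symm, Function.iterate_minimalPeriod] at h1
  rw [hb]
  exact ⟨harc 0 (by omega), h1⟩

end FunctionalDigraph

section TwoCycle

variable {D : Set (Fin n × Fin n)} {a b : Fin n}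

def deleteOutArcs (D : Set (Fin n × Fin n)) (a b : Fin n) : Set (Fin n × Fin n) :=
  { p | p ∈ D ∧ p.1 ≠ a ∧ p.1 ≠ b }

/-- Once an arc leaving `a` or `b` acts, it is an arc of the 2-cycle and identifies `a` and `b`
for good. -/
lemma eq_or_forall_dreach_deleteOutArcs
    (hD : OutDegLeOne D) (hab : (a, b) ∈ D)
    (hba : (b, a) ∈ D) {α : Fin n → Fin n} (hα : α ∈ genSg D) :
    α a = α b ∨ ∀ u, dreach (deleteOutArcs D a b) u (α u) := by
  refine genSg_induction (Q := fun α => α a = α b ∨ ∀ u, dreach (deleteOutArcs D a b) u (α u))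
    (Or.inr fun _ => Relation.ReflTransGen.refl) ?_ α hα
  rintro h p q hpq (hcol | hR)
  · exact Or.inl (congrArg (arcT p q) hcol)
  have ha : h a = a := eq_of_dreach_of_sink (fun _ hw => hw.2.1 rfl) (hR a)
  have hb : h b = b := eq_of_dreach_of_sink (fun _ hw => hw.2.2 rfl) (hR b)
  by_cases hpa : p = a
  · subst hpa
    obtain rfl := hD p hpq hab
    exact Or.inl (by simp [arcT, ha, hb])
  by_cases hpb : p = b
  · subst hpb
    obtain rfl := hD p hpq hba
    exact Or.inl (by simp [arcT, ha, hb])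
  exact Or.inr fun u =>
    (hR u).trans (dreach_arcT_apply (E := deleteOutArcs D a b) ⟨hpq, hpa, hpb⟩ _)

lemma apply_ne_of_apply_apply_ne
    (hD : OutDegLeOne D) (hab : (a, b) ∈ D)
    (hba : (b, a) ∈ D) {β γ : Fin n → Fin n} (hγ : γ ∈ genSg D) (h : β (γ a) ≠ β (γ b)) :
    β a ≠ β b := by
  rcases eq_or_forall_dreach_deleteOutArcs hD hab hba hγ with hcol | hR
  · exact absurd (congrArg β hcol) h
  · rwa [eq_of_dreach_of_sink (fun _ hw => hw.2.1 rfl) (hR a),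
      eq_of_dreach_of_sink (fun _ hw => hw.2.2 rfl) (hR b)] at h

end TwoCycle

section LTrivial

variable {D : Set (Fin n × Fin n)}

/-- If `e ∘ t` and `e` differed at `v`, then `e v` and `e (t v)` would be mutually reachable,
hence a 2-cycle `a ⇄ b` fixed pointwise by `e`. Neither `e` nor `t` may then use the arcs of
that 2-cycle, and in the remaining digraph `v` would reach the two distinct sinks `a` and `b`. -/
theorem iterate_comp_comp_eq_of_idempotent
    (hD : OutDegLeOne D) (hloop : ∀ u : Fin n, (u, u) ∉ D)
    (hcyc : ¬ ∃ (r : ℕ) (v : ℕ → Fin n), IsDCycle D r v ∧ 2 < r) {s t : Fin n → Fin n}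
    (hs : s ∈ genSg D) (ht : t ∈ genSg D) {m : ℕ} (hm : 1 ≤ m)
    (he : (t ∘ s)^[m] ∘ (t ∘ s)^[m] = (t ∘ s)^[m]) : (t ∘ s)^[m] ∘ t = (t ∘ s)^[m] := by
  obtain ⟨k, rfl⟩ : ∃ k, m = k + 1 := ⟨m - 1, by omega⟩
  set g := t ∘ s
  set e := g^[k + 1]
  have hg : g ∈ genSg D := sgMul_mem_genSg hs ht
  have heS : e ∈ genSg D := iterate_mem_of_sgMul_mem (fun _ hx _ hy => sgMul_mem_genSg hx hy) hg hm
  have hfix : ∀ u, e (e u) = e u := congrFun he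
  funext v
  by_contra hne
  have hab : dreach D (e v) (e (t v)) := dreach_apply_of_dreach hD heS (dreach_apply ht v)
  have hba : dreach D (e (t v)) (e v) := by
    have htv : dreach D (t v) (e v) :=
      (dreach_apply_of_dreach hD ht (dreach_apply hs v)).trans (dreach_iterate_apply hg _ k)
    simpa only [hfix] using dreach_apply_of_dreach hD heS htv
  obtain ⟨h1, h2⟩ := mem_and_swap_mem_of_dreach_of_dreach hD hloop hcyc hab hba (Ne.symm hne)
  have hsep_e : e (e v) ≠ e (e (t v)) := by rw [hfix, hfix]; exact Ne.symm hne
  have hsep_t : t (e v) ≠ t (e (t v)) :=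
    apply_ne_of_apply_apply_ne hD h1 h2 hs fun h => hsep_e (congrArg g^[k] h)
  have hRe := (eq_or_forall_dreach_deleteOutArcs hD h1 h2 heS).resolve_left hsep_e
  have hRt := (eq_or_forall_dreach_deleteOutArcs hD h1 h2 ht).resolve_left hsep_t
  exact hne (eq_of_dreach_of_dreach_of_sinks (fun c _ hx _ hy => hD c hx.1 hy.1)
    (fun _ hw => hw.2.1 rfl) (fun _ hw => hw.2.2 rfl) (hRe v) ((hRt v).trans (hRe (t v)))).symm

theorem lTrivial_genSg (hD : OutDegLeOne D)
    (hloop : ∀ u : Fin n, (u, u) ∉ D)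
    (hcyc : ¬ ∃ (r : ℕ) (v : ℕ → Fin n), IsDCycle D r v ∧ 2 < r) : LTrivial (genSg D) := by
  intro x _ y _ hxy
  rcases hxy.eq_or_exists_sgMul with h | ⟨⟨s, hs, hx⟩, t, ht, hy⟩
  · exact h
  obtain ⟨m, hm, he⟩ := exists_iterate_idempotent (t ∘ s)
  have hxe : ∀ k, x ∘ (t ∘ s)^[k] = x := fun k => by
    induction k with
    | zero => rfl
    | succ k ih =>
      rw [Function.iterate_succ, ← Function.comp_assoc, ih]
      exact (congrArg (· ∘ s) hy).symm.trans hx.symm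
  calc x = x ∘ ((t ∘ s)^[m] ∘ t) := by
        rw [iterate_comp_comp_eq_of_idempotent hD hloop hcyc hs ht hm he, hxe]
    _ = y := by rw [← Function.comp_assoc, hxe, hy]; rfl

end LTrivial

end

theorem stmt12_general (n : ℕ) (D : Set (Fin n × Fin n)) (hloop : ∀ u : Fin n, (u, u) ∉ D) :
    LTrivial (genSg D) ↔
      ((∀ a : Fin n, { b : Fin n | (a, b) ∈ D }.Subsingleton) ∧
        ¬ ∃ (r : ℕ) (v : ℕ → Fin n), IsDCycle D r v ∧ 2 < r) := by
  refine ⟨fun hL => ⟨fun a p hp q hq => ?_, fun ⟨r, v, hc, hr⟩ =>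
    not_lTrivial_genSg_of_isDCycle hc hr hL⟩, fun ⟨hD, hcyc⟩ => lTrivial_genSg hD hloop hcyc⟩
  by_contra hpq
  exact not_lTrivial_genSg_of_mem_of_mem hp hq (fun h => hloop a (h ▸ hp))
    (fun h => hloop a (h ▸ hq)) hpq hL

/-- `⟨D⟩` is `L`-trivial iff every vertex has out-degree at most one
and `D` has no cycle of length greater than `2`. -/
theorem stmt12 (n : ℕ) (D : Set (Fin n × Fin n)) (hloop : ∀ u : Fin n, (u, u) ∉ D)
    (hne : D.Nonempty) :
    LTrivial (genSg D) ↔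
      ((∀ a : Fin n, { b : Fin n | (a, b) ∈ D }.Subsingleton) ∧
        ¬ ∃ (r : ℕ) (v : ℕ → Fin n), IsDCycle D r v ∧ 2 < r) :=
  stmt12_general n D hloop
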